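/- For the complete bipartite graph K_{n,m} with n ≥ 2 and m ≥ 2, the e-injective chromatic number is χ_ei(K_{n,m}) = 2. -/

import Mathlib

open SimpleGraph

/-- `u` and `v` are the endpoints of a path on 4 vertices (a `P₄`, of length 3) in `G`:
a walk `u - x - y - v` with pairwise distinct vertices and consecutive vertices adjacent. -/
def P4Ends {V : Type*} (G : SimpleGraph V) (u v : V) : Prop :=
  ∃ x y : V, u ≠ x ∧ u ≠ y ∧ u ≠ v ∧ x ≠ y ∧ x ≠ v ∧ y ≠ v ∧
    G.Adj u x ∧ G.Adj x y ∧ G.Adj y v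

/-- `f` is an e-injective coloring of `G` (with colors in `Fin k`). -/
def IsEInjColoring {V : Type*} (G : SimpleGraph V) {k : ℕ} (f : V → Fin k) : Prop :=
  ∀ u v : V, P4Ends G u v → f u ≠ f v

/-- The e-injective chromatic number `χ_ei`. -/
noncomputable def eChi {V : Type*} (G : SimpleGraph V) : ℕ :=
  sInf {k : ℕ | ∃ f : V → Fin k, IsEInjColoring G f}

/-- The usual chromatic number, as a natural number. -/
noncomputable def chi {V : Type*} (G : SimpleGraph V) : ℕ :=
  sInf {k : ℕ | ∃ f : V → Fin k, ∀ u v : V, G.Adj u v → f u ≠ f v}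

/-- The injective chromatic number `χ_i`. -/
noncomputable def iChi {V : Type*} (G : SimpleGraph V) : ℕ :=
  sInf {k : ℕ | ∃ f : V → Fin k, ∀ u v : V, u ≠ v →
    (∃ w, G.Adj w u ∧ G.Adj w v) → f u ≠ f v}

/-- The 2-distance chromatic number `χ₂`. -/
noncomputable def dist2Chi {V : Type*} (G : SimpleGraph V) : ℕ :=
  sInf {k : ℕ | ∃ f : V → Fin k, ∀ u v : V, u ≠ v →
    (G.Adj u v ∨ ∃ w, G.Adj u w ∧ G.Adj w v) → f u ≠ f v}

/-- The join `G ∨ H` of two graphs on disjoint vertex sets. -/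
def joinGraph {V W : Type*} (G : SimpleGraph V) (H : SimpleGraph W) :
    SimpleGraph (V ⊕ W) where
  Adj x y :=
    match x, y with
    | Sum.inl a, Sum.inl b => G.Adj a b
    | Sum.inr a, Sum.inr b => H.Adj a b
    | Sum.inl _, Sum.inr _ => True
    | Sum.inr _, Sum.inl _ => True
  symm := by refine ⟨?_⟩; rintro (a | a) (b | b) h <;> simp_all <;> exact h.symm
  loopless := by refine ⟨?_⟩; rintro (a | a) h <;> simp_all

/-- The strong product `G ⊠ H`. -/
def strongProd {V W : Type*} (G : SimpleGraph V) (H : SimpleGraph W) :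
    SimpleGraph (V × W) where
  Adj x y := (x.1 = y.1 ∧ H.Adj x.2 y.2) ∨ (x.2 = y.2 ∧ G.Adj x.1 y.1) ∨
    (G.Adj x.1 y.1 ∧ H.Adj x.2 y.2)
  symm := by
    refine ⟨?_⟩
    rintro ⟨a, u⟩ ⟨b, v⟩ (⟨h1, h2⟩ | ⟨h1, h2⟩ | ⟨h1, h2⟩)
    · exact Or.inl ⟨h1.symm, h2.symm⟩
    · exact Or.inr (Or.inl ⟨h1.symm, h2.symm⟩)
    · exact Or.inr (Or.inr ⟨h1.symm, h2.symm⟩)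
  loopless := by refine ⟨?_⟩; rintro ⟨a, u⟩ (⟨_, h⟩ | ⟨_, h⟩ | ⟨h, _⟩) <;> exact h.ne rfl

theorem stmt_13 (n m : ℕ) (hn : 2 ≤ n) (hm : 2 ≤ m) :
    eChi (completeBipartiteGraph (Fin n) (Fin m)) = 2 := by
  have h2 : (2 : ℕ) ∈ {k : ℕ | ∃ f : Fin n ⊕ Fin m → Fin k,
      IsEInjColoring (completeBipartiteGraph (Fin n) (Fin m)) f} := by
    refine ⟨fun x => Sum.elim (fun _ => 0) (fun _ => 1) x, ?_⟩
    rintro (u | u) (v | v) ⟨x, y, h1, h2, h3, h4, h5, h6, a1, a2, a3⟩ <;>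
      rcases x with x | x <;> rcases y with y | y <;>
      simp_all [completeBipartiteGraph]
  refine le_antisymm (Nat.sInf_le h2) (le_csInf ⟨2, h2⟩ ?_)
  rintro k ⟨f, hf⟩
  by_contra hk
  interval_cases k
  · exact (f (Sum.inl ⟨0, by omega⟩)).elim0
  · exact hf (Sum.inl ⟨0, by omega⟩) (Sum.inr ⟨1, by omega⟩)
      ⟨Sum.inr ⟨0, by omega⟩, Sum.inl ⟨1, by omega⟩, by
        refine ⟨by simp, by simp, by simp, by simp, by simp, by simp, by simp [completeBipartiteGraph], by simp [completeBipartiteGraph], by simp [completeBipartiteGraph]⟩⟩ (Subsingleton.elim _ _)
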